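/- arXiv:1709.01457 — 2 statements merged into one kernel-verified Lean document; each statement's English description precedes it below -/
import Mathlib

section
/- Let n ≥ 1, 1 < p < ∞, α > 0. For every j ∈ ℕ let a_j, b_j : ℂⁿ → [0,1] be measurable, and assume there are N, M ∈ ℕ such that each z ∈ ℂⁿ belongs to at most N of the sets supp(a_j) and to at most M of the sets supp(b_j). If A is a bounded operator on L_α^p, then for every f ∈ L_α^p the series ∑_{j=1}^∞ M_{a_j} A M_{b_j} f converges in L_α^p (i.e. the partial sums of ∑_j M_{a_j} A M_{b_j} converge strongly), and the resulting bounded operator satisfies ‖∑_{j=1}^∞ M_{a_j} A M_{b_j}‖ ≤ N M ‖A‖. -/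
open MeasureTheory Complex Filter Metric

noncomputable section

set_option synthInstance.maxHeartbeats 1000000
set_option maxHeartbeats 1000000

/-- ℂⁿ with its Euclidean (Hermitian) norm. -/
abbrev Cn (n : ℕ) := EuclideanSpace ℂ (Fin n)

instance (n : ℕ) : MeasurableSpace (Cn n) := MeasurableSpace.comap WithLp.ofLp MeasurableSpace.pi
instance (n : ℕ) : MeasureSpace (Cn n) :=
  ⟨Measure.map (WithLp.toLp 2) (Measure.pi fun _ => (volume : Measure ℂ))⟩

/-- The standard Hermitian inner product ⟨z,w⟩ on ℂⁿ, linear in the first argument and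
antilinear in the second. -/
def herm {n : ℕ} (z w : Cn n) : ℂ := inner ℂ w z

/-- The Gaussian measure dμ_ν(z) = (ν/π)ⁿ e^{−ν|z|²} dz on ℂⁿ. -/
def gaussMeasure (n : ℕ) (ν : ℝ) : Measure (Cn n) :=
  volume.withDensity fun z => ENNReal.ofReal ((ν / Real.pi) ^ n * Real.exp (-ν * ‖z‖ ^ 2))

/-- L_α^p = L^p(ℂⁿ, μ_{pα/2}). -/
abbrev Lpa (n : ℕ) (p α : ℝ) := Lp ℂ (ENNReal.ofReal p) (gaussMeasure n (p * α / 2))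

/-- `M` is the operator of multiplication by `g` on `L_α^p`. -/
def IsMulOp (n : ℕ) (p α : ℝ) [Fact (1 ≤ ENNReal.ofReal p)] (g : Cn n → ℂ)
    (M : Lpa n p α →L[ℂ] Lpa n p α) : Prop :=
  ∀ f : Lpa n p α, ⇑(M f) =ᵐ[gaussMeasure n (p * α / 2)] fun z => g z * f z

open scoped ENNReal
open Finset

/-! Pointwise, at most `N` of the weights `a_j(z)` are nonzero and all lie in `[0,1]`, so by the
power-mean inequality `|∑_j a_j g_j|^p ≤ N^{p-1} ∑_j |g_j|^p`; likewise `∑_j b_j^p ≤ M`.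
Integrating, `‖∑_{j∈s} M_{a_j} A M_{b_j} f‖^p ≤ N^{p-1} ‖A‖^p ∑_{j∈s} ‖M_{b_j} f‖^p` for every
finite `s`, and `∑_j ‖M_{b_j} f‖^p ≤ M ‖f‖^p`. The series is therefore unconditionally Cauchy,
and its sum is an operator of norm at most `N^{1-1/p} M^{1/p} ‖A‖ ≤ N M ‖A‖`. -/

section Pointwise

variable {ι 𝕜 E : Type*} [NormedField 𝕜] [NormedAddCommGroup E] [NormedSpace 𝕜 E]

lemma card_le_of_encard_ne_zero_le {R : Type*} [Zero R] {c : ι → R} {N : ℕ}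
    (hN : {i | c i ≠ 0}.encard ≤ N) {t : Finset ι} (ht : ∀ i ∈ t, c i ≠ 0) : #t ≤ N := by
  have h := (Set.encard_mono ht : (↑t : Set ι).encard ≤ _).trans hN
  rwa [Set.encard_coe_eq_coe_finsetCard, Nat.cast_le] at h

variable {c : ι → 𝕜} {N : ℕ}

lemma enorm_sum_smul_rpow_le (hc : ∀ i, ‖c i‖ₑ ≤ 1) (hN : {i | c i ≠ 0}.encard ≤ N)
    {p : ℝ} (hp : 1 ≤ p) (w : ι → E) (s : Finset ι) :
    ‖∑ i ∈ s, c i • w i‖ₑ ^ p ≤ (N : ℝ≥0∞) ^ (p - 1) * ∑ i ∈ s, ‖w i‖ₑ ^ p := by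
  classical
  set t := s.filter (c · ≠ 0)
  have hst : ∑ i ∈ t, c i • w i = ∑ i ∈ s, c i • w i :=
    sum_filter_of_ne fun i _ h hci => h (by simp [hci])
  have hcard : (#t : ℝ≥0∞) ≤ N := by
    exact_mod_cast card_le_of_encard_ne_zero_le hN fun i hi => (mem_filter.1 hi).2
  calc ‖∑ i ∈ s, c i • w i‖ₑ ^ p ≤ (∑ i ∈ t, ‖w i‖ₑ) ^ p := by
        rw [← hst]
        gcongr
        refine (enorm_sum_le t fun i => c i • w i).trans (sum_le_sum fun i _ => ?_)
        rw [enorm_smul]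
        exact mul_le_of_le_one_left' (hc i)
    _ ≤ (#t : ℝ≥0∞) ^ (p - 1) * ∑ i ∈ t, ‖w i‖ₑ ^ p :=
        ENNReal.rpow_sum_le_const_mul_sum_rpow t _ hp
    _ ≤ (N : ℝ≥0∞) ^ (p - 1) * ∑ i ∈ s, ‖w i‖ₑ ^ p := by
        gcongr
        exact filter_subset _ _

lemma sum_enorm_rpow_le (hc : ∀ i, ‖c i‖ₑ ≤ 1) (hN : {i | c i ≠ 0}.encard ≤ N)
    {p : ℝ} (hp : 0 < p) (s : Finset ι) : ∑ i ∈ s, ‖c i‖ₑ ^ p ≤ N := by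
  classical
  rw [← sum_filter_of_ne (p := (c · ≠ 0)) fun i _ h hci => h (by simp [hci, hp])]
  calc ∑ i ∈ s.filter (c · ≠ 0), ‖c i‖ₑ ^ p ≤ ∑ i ∈ s.filter (c · ≠ 0), 1 :=
        sum_le_sum fun i _ => ENNReal.rpow_le_one (hc i) hp.le
    _ ≤ N := by
        simpa using card_le_of_encard_ne_zero_le hN fun i hi => (mem_filter.1 hi).2

end Pointwise

section LpEstimates

variable {ι X 𝕜 E : Type*} [NormedField 𝕜] [NormedAddCommGroup E] [NormedSpace 𝕜 E]

structure BoundedOverlap (c : ι → X → 𝕜) (N : ℕ) : Prop where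
  enorm_le_one : ∀ i x, ‖c i x‖ₑ ≤ 1
  encard_le : ∀ x, {i | c i x ≠ 0}.encard ≤ N

lemma boundedOverlap_ofReal {𝕜 : Type*} [RCLike 𝕜] {a : ι → X → ℝ} {N : ℕ}
    (h01 : ∀ i x, a i x ∈ Set.Icc (0 : ℝ) 1)
    (hN : ∀ x, {i | x ∈ Function.support (a i)}.encard ≤ N) :
    BoundedOverlap (fun i x => (a i x : 𝕜)) N where
  enorm_le_one i x := by
    rw [← ofReal_norm, RCLike.norm_ofReal, abs_of_nonneg (h01 i x).1]
    exact ENNReal.ofReal_le_one.2 (h01 i x).2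
  encard_le x := by simpa using hN x

variable [MeasurableSpace X] {μ : Measure X}

lemma MeasureTheory.Lp.enorm_rpow_eq_lintegral {p : ℝ} (hp : 0 < p) (f : Lp E (ENNReal.ofReal p) μ) :
    ‖f‖ₑ ^ p = ∫⁻ x, ‖f x‖ₑ ^ p ∂μ := by
  rw [Lp.enorm_def, eLpNorm_eq_eLpNorm' (by simpa using hp) ENNReal.ofReal_ne_top,
    ENNReal.toReal_ofReal hp.le, lintegral_rpow_enorm_eq_rpow_eLpNorm' hp]

variable {p : ℝ} [Fact (1 ≤ ENNReal.ofReal p)] {c : ι → X → 𝕜} {N : ℕ}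

lemma one_le_of_fact_one_le_ofReal : 1 ≤ p :=
  ENNReal.one_le_ofReal.1 Fact.out

lemma enorm_sum_rpow_le_of_ae_eq_smul (hc : BoundedOverlap c N)
    {g h : ι → Lp E (ENNReal.ofReal p) μ} (hh : ∀ i, h i =ᵐ[μ] fun x => c i x • g i x)
    (s : Finset ι) :
    ‖∑ i ∈ s, h i‖ₑ ^ p ≤ (N : ℝ≥0∞) ^ (p - 1) * ∑ i ∈ s, ‖g i‖ₑ ^ p := by
  have hp : 1 ≤ p := one_le_of_fact_one_le_ofReal
  have hae : ⇑(∑ i ∈ s, h i) =ᵐ[μ] fun x => ∑ i ∈ s, c i x • g i x := by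
    filter_upwards [Lp.coeFn_fun_finsetSum s h, s.eventually_all.2 fun i _ => hh i] with x hx hhx
    rw [hx]
    exact sum_congr rfl hhx
  simp_rw [Lp.enorm_rpow_eq_lintegral (by linarith : 0 < p)]
  calc ∫⁻ x, ‖(∑ i ∈ s, h i) x‖ₑ ^ p ∂μ = ∫⁻ x, ‖∑ i ∈ s, c i x • g i x‖ₑ ^ p ∂μ :=
        lintegral_congr_ae (hae.fun_comp fun y => ‖y‖ₑ ^ p)
    _ ≤ ∫⁻ x, (N : ℝ≥0∞) ^ (p - 1) * ∑ i ∈ s, ‖g i x‖ₑ ^ p ∂μ := lintegral_mono fun x =>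
        enorm_sum_smul_rpow_le (hc.enorm_le_one · x) (hc.encard_le x) hp _ s
    _ = (N : ℝ≥0∞) ^ (p - 1) * ∑ i ∈ s, ∫⁻ x, ‖g i x‖ₑ ^ p ∂μ := by
        rw [lintegral_const_mul' _ _ (by simp [hp]), lintegral_finsetSum' s fun i _ =>
          (Lp.aestronglyMeasurable (g i)).enorm.pow_const p]

lemma sum_enorm_rpow_le_of_ae_eq_smul (hc : BoundedOverlap c N)
    {f : Lp E (ENNReal.ofReal p) μ} {h : ι → Lp E (ENNReal.ofReal p) μ}
    (hh : ∀ i, h i =ᵐ[μ] fun x => c i x • f x) (s : Finset ι) :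
    ∑ i ∈ s, ‖h i‖ₑ ^ p ≤ N * ‖f‖ₑ ^ p := by
  have hp : 0 < p := by linarith [one_le_of_fact_one_le_ofReal (p := p)]
  simp_rw [Lp.enorm_rpow_eq_lintegral hp]
  rw [← lintegral_finsetSum' s fun i _ => (Lp.aestronglyMeasurable (h i)).enorm.pow_const p,
    ← lintegral_const_mul' _ _ (ENNReal.natCast_ne_top N)]
  refine lintegral_mono_ae ?_
  filter_upwards [s.eventually_all.2 fun i _ => hh i] with x hx
  calc ∑ i ∈ s, ‖h i x‖ₑ ^ p = (∑ i ∈ s, ‖c i x‖ₑ ^ p) * ‖f x‖ₑ ^ p := by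
        rw [sum_mul]
        refine sum_congr rfl fun i hi => ?_
        rw [hx i hi, enorm_smul, ENNReal.mul_rpow_of_nonneg _ _ hp.le]
    _ ≤ N * ‖f x‖ₑ ^ p := by
        gcongr
        exact sum_enorm_rpow_le (hc.enorm_le_one · x) (hc.encard_le x) hp s

end LpEstimates

lemma summable_of_enorm_sum_rpow_le {ι F : Type*} [NormedAddCommGroup F] [CompleteSpace F]
    {u : ι → F} {β : ι → ℝ≥0∞} {p : ℝ} (hp : 0 < p) (hβ : ∑' i, β i ≠ ∞)
    (h : ∀ s, ‖∑ i ∈ s, u i‖ₑ ^ p ≤ ∑ i ∈ s, β i) : Summable u := by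
  classical
  refine summable_iff_vanishing_norm.2 fun ε hε => ?_
  have hεp : 0 < ENNReal.ofReal ε ^ p :=
    ENNReal.rpow_pos (ENNReal.ofReal_pos.2 hε) ENNReal.ofReal_ne_top
  obtain ⟨s, hs⟩ :=
    ((tendsto_order.1 (ENNReal.tendsto_tsum_compl_atTop_zero hβ)).2 _ hεp).exists
  refine ⟨s, fun t hts => ?_⟩
  have htail : ∑ i ∈ t, β i ≤ ∑' i : {i // i ∉ s}, β i := by
    rw [← sum_subtype_of_mem β fun i hi => Finset.disjoint_left.1 hts hi]
    exact ENNReal.sum_le_tsum _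
  have hlt := (h t).trans_lt (htail.trans_lt hs)
  rwa [ENNReal.rpow_lt_rpow_iff hp, ← ofReal_norm, ENNReal.ofReal_lt_ofReal_iff hε] at hlt

section Operators

variable {ι X 𝕜 E : Type*} [MeasurableSpace X] {μ : Measure X}
  [NontriviallyNormedField 𝕜] [NormedAddCommGroup E] [NormedSpace 𝕜 E] [CompleteSpace E]
  {p : ℝ} [Fact (1 ≤ ENNReal.ofReal p)]

theorem exists_hasSum_mulOp_comp_mulOp [Countable ι] {a b : ι → X → 𝕜} {N M : ℕ}
    (ha : BoundedOverlap a N) (hb : BoundedOverlap b M)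
    (A : Lp E (ENNReal.ofReal p) μ →L[𝕜] Lp E (ENNReal.ofReal p) μ)
    {Ma Mb : ι → Lp E (ENNReal.ofReal p) μ →L[𝕜] Lp E (ENNReal.ofReal p) μ}
    (hMa : ∀ i f, ⇑(Ma i f) =ᵐ[μ] fun x => a i x • f x)
    (hMb : ∀ i f, ⇑(Mb i f) =ᵐ[μ] fun x => b i x • f x) :
    ∃ T : Lp E (ENNReal.ofReal p) μ →L[𝕜] Lp E (ENNReal.ofReal p) μ,
      (∀ f, HasSum (fun i => Ma i (A (Mb i f))) (T f)) ∧
      ∀ f, ‖T f‖ₑ ^ p ≤ (N : ℝ≥0∞) ^ (p - 1) * M * ‖A‖ₑ ^ p * ‖f‖ₑ ^ p := by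
  have hp1 : 1 ≤ p := one_le_of_fact_one_le_ofReal
  have hp : 0 < p := by linarith
  set C := (N : ℝ≥0∞) ^ (p - 1) * ‖A‖ₑ ^ p with hC
  have hpartial : ∀ f s, ‖∑ i ∈ s, Ma i (A (Mb i f))‖ₑ ^ p ≤ ∑ i ∈ s, C * ‖Mb i f‖ₑ ^ p := by
    intro f s
    refine (enorm_sum_rpow_le_of_ae_eq_smul ha (fun i => hMa i _) s).trans ?_
    rw [mul_sum]
    refine sum_le_sum fun i _ => ?_
    rw [hC, mul_assoc, ← ENNReal.mul_rpow_of_nonneg _ _ hp.le]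
    gcongr
    exact A.le_opENorm _
  have hbound : ∀ f s, ∑ i ∈ s, C * ‖Mb i f‖ₑ ^ p ≤ C * (M * ‖f‖ₑ ^ p) := fun f s => by
    rw [← mul_sum]
    gcongr
    exact sum_enorm_rpow_le_of_ae_eq_smul hb (fun i => hMb i f) s
  have hsummable : ∀ f, Summable fun i => Ma i (A (Mb i f)) := fun f =>
    summable_of_enorm_sum_rpow_le hp
      (ne_top_of_le_ne_top (by finiteness) (tsum_le_of_sum_le' zero_le (hbound f)))
      (hpartial f)
  let T := continuousLinearMapOfTendsto (fun s : Finset ι => ∑ i ∈ s, (Ma i).comp (A.comp (Mb i)))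
    (tendsto_pi_nhds.2 fun f => by
      simp only [_root_.sum_apply, ContinuousLinearMap.comp_apply]
      exact (hsummable f).hasSum)
  refine ⟨T, fun f => (hsummable f).hasSum, fun f => ?_⟩
  have hcont : Continuous fun y : Lp E (ENNReal.ofReal p) μ => ‖y‖ₑ ^ p :=
    (ENNReal.continuous_rpow_const).comp continuous_enorm
  calc ‖T f‖ₑ ^ p ≤ C * (M * ‖f‖ₑ ^ p) :=
        le_of_tendsto' ((hcont.tendsto _).comp (hsummable f).hasSum) fun s =>
          (hpartial f s).trans (hbound f s)
    _ = (N : ℝ≥0∞) ^ (p - 1) * M * ‖A‖ₑ ^ p * ‖f‖ₑ ^ p := by ring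

end Operators

lemma ENNReal.natCast_rpow_le_rpow_of_le {k : ℕ} {q r : ℝ} (hq : 0 < q) (hqr : q ≤ r) :
    (k : ℝ≥0∞) ^ q ≤ (k : ℝ≥0∞) ^ r := by
  rcases k.eq_zero_or_pos with rfl | hk
  · simp [ENNReal.zero_rpow_of_pos hq]
  · exact ENNReal.rpow_le_rpow_of_exponent_le (by exact_mod_cast hk) hqr

theorem statement5_general (n : ℕ) (p α : ℝ) (hp : 1 < p)
    [Fact (1 ≤ ENNReal.ofReal p)]
    (N M : ℕ) (a b : ℕ → Cn n → ℝ)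
    (ha01 : ∀ j z, a j z ∈ Set.Icc (0 : ℝ) 1) (hb01 : ∀ j z, b j z ∈ Set.Icc (0 : ℝ) 1)
    (haN : ∀ z : Cn n, ({j | z ∈ Function.support (a j)} : Set ℕ).encard ≤ N)
    (hbM : ∀ z : Cn n, ({j | z ∈ Function.support (b j)} : Set ℕ).encard ≤ M)
    (A : Lpa n p α →L[ℂ] Lpa n p α)
    (Ma Mb : ℕ → Lpa n p α →L[ℂ] Lpa n p α)
    (hMa : ∀ j, IsMulOp n p α (fun z => ((a j z : ℝ) : ℂ)) (Ma j))
    (hMb : ∀ j, IsMulOp n p α (fun z => ((b j z : ℝ) : ℂ)) (Mb j)) :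
    ∃ T : Lpa n p α →L[ℂ] Lpa n p α,
      (∀ f : Lpa n p α,
        Tendsto (fun m => ∑ j ∈ Finset.range m, (Ma j) (A ((Mb j) f))) atTop (nhds (T f))) ∧
      ‖T‖ ≤ (N : ℝ) * M * ‖A‖ := by
  have hp0 : 0 < p := by linarith
  obtain ⟨T, hT, hTle⟩ := exists_hasSum_mulOp_comp_mulOp
    (boundedOverlap_ofReal ha01 haN) (boundedOverlap_ofReal hb01 hbM) A hMa hMb
  refine ⟨T, fun f => (hT f).tendsto_sum_nat, ?_⟩
  have hTe : ‖T‖ₑ ≤ N * M * ‖A‖ₑ := T.opENorm_le_bound fun f => by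
    rw [← ENNReal.rpow_le_rpow_iff hp0]
    calc ‖T f‖ₑ ^ p ≤ (N : ℝ≥0∞) ^ (p - 1) * M * ‖A‖ₑ ^ p * ‖f‖ₑ ^ p := hTle f
      _ ≤ (N : ℝ≥0∞) ^ p * (M : ℝ≥0∞) ^ p * ‖A‖ₑ ^ p * ‖f‖ₑ ^ p := by
          gcongr ?_ * ?_ * _ * _
          · exact ENNReal.natCast_rpow_le_rpow_of_le (by linarith) (by linarith)
          · simpa using ENNReal.natCast_rpow_le_rpow_of_le (k := M) one_pos hp.le
      _ = (N * M * ‖A‖ₑ * ‖f‖ₑ) ^ p := by simp only [ENNReal.mul_rpow_of_nonneg _ _ hp0.le]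
  calc ‖T‖ = ‖T‖ₑ.toReal := (toReal_enorm T).symm
    _ ≤ (N * M * ‖A‖ₑ : ℝ≥0∞).toReal := ENNReal.toReal_mono (by finiteness) hTe
    _ = N * M * ‖A‖ := by simp

/-- If each z belongs to at most N of the sets supp(a_j) and at most M of the
sets supp(b_j) (a_j, b_j measurable with values in [0,1]), and A is a bounded operator on
L_α^p, then the series ∑_j M_{a_j} A M_{b_j} converges strongly and the resulting operator
has norm at most N·M·‖A‖. -/
theorem statement5 (n : ℕ) (hn : 1 ≤ n) (p α : ℝ) (hp : 1 < p) (hα : 0 < α)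
    [Fact (1 ≤ ENNReal.ofReal p)]
    (N M : ℕ) (a b : ℕ → Cn n → ℝ)
    (ham : ∀ j, Measurable (a j)) (hbm : ∀ j, Measurable (b j))
    (ha01 : ∀ j z, a j z ∈ Set.Icc (0 : ℝ) 1) (hb01 : ∀ j z, b j z ∈ Set.Icc (0 : ℝ) 1)
    (haN : ∀ z : Cn n, ({j | z ∈ Function.support (a j)} : Set ℕ).encard ≤ N)
    (hbM : ∀ z : Cn n, ({j | z ∈ Function.support (b j)} : Set ℕ).encard ≤ M)
    (A : Lpa n p α →L[ℂ] Lpa n p α)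
    (Ma Mb : ℕ → Lpa n p α →L[ℂ] Lpa n p α)
    (hMa : ∀ j, IsMulOp n p α (fun z => ((a j z : ℝ) : ℂ)) (Ma j))
    (hMb : ∀ j, IsMulOp n p α (fun z => ((b j z : ℝ) : ℂ)) (Mb j)) :
    ∃ T : Lpa n p α →L[ℂ] Lpa n p α,
      (∀ f : Lpa n p α,
        Tendsto (fun m => ∑ j ∈ Finset.range m, (Ma j) (A ((Mb j) f))) atTop (nhds (T f))) ∧
      ‖T‖ ≤ (N : ℝ) * M * ‖A‖ :=
  statement5_general n p α hp N M a b ha01 hb01 haN hbM A Ma Mb hMa hMb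
end
end

section
/- Let n ≥ 1, 1 < p < ∞, α > 0. The projection P_α, viewed as a bounded operator on L_α^p, is band-dominated, i.e. P_α is the limit in operator norm of a sequence of band operators on L_α^p. -/
open MeasureTheory Complex Filter Metric

noncomputable section

set_option synthInstance.maxHeartbeats 1000000
set_option maxHeartbeats 1000000

/-- `P` acts on `L_α^p` by the integral formula (P_α f)(z) = ∫ e^{α⟨z,w⟩} f(w) dμ_α(w). -/
def IsProjOp (n : ℕ) (p α : ℝ) [Fact (1 ≤ ENNReal.ofReal p)]
    (P : Lpa n p α →L[ℂ] Lpa n p α) : Prop :=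
  ∀ f : Lpa n p α,
    ⇑(P f) =ᵐ[gaussMeasure n (p * α / 2)]
      fun z => ∫ w, Complex.exp ((α : ℂ) * herm z w) * f w ∂gaussMeasure n α

/-- The distance between two subsets of a metric space (valued in [0,∞]). -/
def setDist {X : Type*} [PseudoEMetricSpace X] (s t : Set X) : ENNReal :=
  ⨅ (x ∈ s) (y ∈ t), edist x y

/-- A band operator on L_α^p : there is a band width ω > 0 such that M_f A M_g = 0 whenever
f, g ∈ L^∞(ℂⁿ) have dist(supp f, supp g) > ω. -/
def IsBandOp (n : ℕ) (p α : ℝ) [Fact (1 ≤ ENNReal.ofReal p)]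
    (A : Lpa n p α →L[ℂ] Lpa n p α) : Prop :=
  ∃ ω : ℝ, 0 < ω ∧
    ∀ (f g : Cn n → ℂ), Measurable f → Measurable g →
      (∃ C, ∀ z, ‖f z‖ ≤ C) → (∃ C, ∀ z, ‖g z‖ ≤ C) →
      ∀ (Mf Mg : Lpa n p α →L[ℂ] Lpa n p α),
        IsMulOp n p α f Mf → IsMulOp n p α g Mg →
        ENNReal.ofReal ω < setDist (Function.support f) (Function.support g) →
        Mf.comp (A.comp Mg) = 0

/-- A band-dominated operator on L_α^p : a norm limit of band operators. -/
def IsBDO (n : ℕ) (p α : ℝ) [Fact (1 ≤ ENNReal.ofReal p)]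
    (A : Lpa n p α →L[ℂ] Lpa n p α) : Prop :=
  ∃ B : ℕ → Lpa n p α →L[ℂ] Lpa n p α,
    (∀ k, IsBandOp n p α (B k)) ∧ Tendsto (fun k => ‖A - B k‖) atTop (nhds 0)

/-!
Let `σ(x) = e^{-α|x|²/2}`. Since `|e^{α⟨z,w⟩}| = e^{α Re⟨z,w⟩}`, completing the square gives
`σ(z) e^{-α|w|²} |e^{α⟨z,w⟩}| = σ(z - w) σ(w)`, so `σ |P_α f|` is dominated by a multiple of the
convolution `σ * (σ |f|)`; and as `dμ_{pα/2} ∝ σ^p dz`, the norm of `L_α^p` is a multiple of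
`f ↦ ‖σ f‖_{L^p(dz)}`. The same holds for the kernel restricted to `z - w ∈ S`, with `σ` replaced by
`σ 1_S`, so by the Schur test that restricted operator has norm `≲ ∫_S σ`. Restricting to
`|z - w| ≤ r` gives band operators of width `r`, and the remainder has norm `≲ ∫_{|x| > r} σ → 0`.
-/

open scoped ENNReal

instance (n : ℕ) : BorelSpace (Cn n) := PiLp.borelSpace 2 (X := fun _ : Fin n => ℂ)

theorem Cn.measurePreserving_toLp (n : ℕ) :
    MeasurePreserving (WithLp.toLp 2) (Measure.pi fun _ : Fin n => (volume : Measure ℂ))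
      (volume : Measure (Cn n)) :=
  ⟨WithLp.measurable_toLp 2 _, rfl⟩

instance (n : ℕ) : SigmaFinite (volume : Measure (Cn n)) :=
  (MeasurableEquiv.toLp 2 (Fin n → ℂ)).sigmaFinite_map

instance (n : ℕ) : (volume : Measure (Cn n)).IsAddLeftInvariant :=
  isAddLeftInvariant_map (WithLp.linearEquiv 2 ℂ (Fin n → ℂ)).symm.toAddMonoidHom.toAddHom
    (WithLp.measurable_toLp 2 _) (WithLp.linearEquiv 2 ℂ (Fin n → ℂ)).symm.surjective

section Schur

variable {X Y : Type*} [MeasurableSpace X] [MeasurableSpace Y] {μ : Measure X} {ν : Measure Y}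
  {p q : ℝ}

theorem ENNReal.lintegral_mul_rpow_le (hpq : p.HolderConjugate q) {k F : Y → ℝ≥0∞}
    (hk : AEMeasurable k ν) (hF : AEMeasurable F ν) :
    (∫⁻ y, k y * F y ∂ν) ^ p ≤ (∫⁻ y, k y ∂ν) ^ (p - 1) * ∫⁻ y, k y * F y ^ p ∂ν := by
  have hp := hpq.pos
  have hq := hpq.symm.pos
  have hsplit : ∀ y, k y * F y = (k y ^ p⁻¹ * F y) * k y ^ q⁻¹ := fun y => by
    rw [mul_right_comm, ← ENNReal.rpow_add_of_nonneg _ _ (by positivity) (by positivity),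
      hpq.inv_add_inv_eq_one, ENNReal.rpow_one]
  have hholder := ENNReal.lintegral_mul_le_Lp_mul_Lq ν hpq ((hk.pow_const p⁻¹).mul hF)
    (hk.pow_const q⁻¹)
  simp only [Pi.mul_apply, ← hsplit, ENNReal.mul_rpow_of_nonneg _ _ hp.le,
    ENNReal.rpow_inv_rpow hp.ne', ENNReal.rpow_inv_rpow hq.ne'] at hholder
  calc (∫⁻ y, k y * F y ∂ν) ^ p
      ≤ ((∫⁻ y, k y * F y ^ p ∂ν) ^ (1 / p) * (∫⁻ y, k y ∂ν) ^ (1 / q)) ^ p :=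
        ENNReal.rpow_le_rpow hholder hp.le
    _ = (∫⁻ y, k y ∂ν) ^ (p - 1) * ∫⁻ y, k y * F y ^ p ∂ν := by
        rw [ENNReal.mul_rpow_of_nonneg _ _ hp.le, ← ENNReal.rpow_mul, ← ENNReal.rpow_mul,
          one_div_mul_cancel hp.ne', ENNReal.rpow_one, one_div_mul_eq_div,
          hpq.div_conj_eq_sub_one, mul_comm]

theorem lintegral_rpow_lintegral_mul_le_of_schur [SFinite μ] [SFinite ν]
    (hpq : p.HolderConjugate q) {k : X → Y → ℝ≥0∞} (hk : Measurable (Function.uncurry k))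
    {F : Y → ℝ≥0∞} (hF : Measurable F) {A B : ℝ≥0∞} (hA : ∀ x, ∫⁻ y, k x y ∂ν ≤ A)
    (hB : ∀ y, ∫⁻ x, k x y ∂μ ≤ B) :
    ∫⁻ x, (∫⁻ y, k x y * F y ∂ν) ^ p ∂μ ≤ A ^ (p - 1) * B * ∫⁻ y, F y ^ p ∂ν := by
  have hp1 : 0 ≤ p - 1 := hpq.sub_one_pos.le
  have hkx : ∀ x, Measurable (k x) := fun x => hk.comp measurable_prodMk_left
  have hkF : Measurable (Function.uncurry fun x y => k x y * F y ^ p) :=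
    hk.mul ((hF.comp measurable_snd).pow_const p)
  calc ∫⁻ x, (∫⁻ y, k x y * F y ∂ν) ^ p ∂μ
      ≤ ∫⁻ x, A ^ (p - 1) * ∫⁻ y, k x y * F y ^ p ∂ν ∂μ := by
        refine lintegral_mono fun x => (ENNReal.lintegral_mul_rpow_le hpq
          (hkx x).aemeasurable hF.aemeasurable).trans ?_
        gcongr
        exact hA x
    _ = A ^ (p - 1) * ∫⁻ y, (∫⁻ x, k x y ∂μ) * F y ^ p ∂ν := by
        rw [lintegral_const_mul _ hkF.lintegral_prod_right, lintegral_lintegral_swap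
          hkF.aemeasurable]
        congr 1
        exact lintegral_congr fun y => lintegral_mul_const _ (hk.comp measurable_prodMk_right)
    _ ≤ A ^ (p - 1) * ∫⁻ y, B * F y ^ p ∂ν := by
        gcongr with y
        exact hB y
    _ = A ^ (p - 1) * B * ∫⁻ y, F y ^ p ∂ν := by
        rw [lintegral_const_mul _ (hF.pow_const p), mul_assoc]

end Schur

theorem lintegral_rpow_lintegral_sub_mul_le {G : Type*} [MeasurableSpace G] [AddGroup G]
    [MeasurableAdd G] [MeasurableSub₂ G] {μ : Measure G} [SFinite μ] [μ.IsAddRightInvariant]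
    {p : ℝ} (hp : 1 < p) {H F : G → ℝ≥0∞} (hH : Measurable H) (hH_neg : ∀ x, H (-x) = H x)
    (hF : Measurable F) :
    ∫⁻ z, (∫⁻ w, H (z - w) * F w ∂μ) ^ p ∂μ ≤ (∫⁻ x, H x ∂μ) ^ p * ∫⁻ w, F w ^ p ∂μ := by
  have hrow : ∀ z, ∫⁻ w, H (z - w) ∂μ = ∫⁻ x, H x ∂μ := fun z => by
    simp_rw [← hH_neg (z - _), neg_sub]
    exact lintegral_sub_right_eq_self H z
  have hpow : (∫⁻ x, H x ∂μ) ^ (p - 1) * ∫⁻ x, H x ∂μ = (∫⁻ x, H x ∂μ) ^ p := by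
    conv_rhs => rw [← sub_add_cancel p 1]
    rw [ENNReal.rpow_add_of_nonneg _ _ (by linarith) zero_le_one, ENNReal.rpow_one]
  calc ∫⁻ z, (∫⁻ w, H (z - w) * F w ∂μ) ^ p ∂μ
      ≤ (∫⁻ x, H x ∂μ) ^ (p - 1) * (∫⁻ x, H x ∂μ) * ∫⁻ w, F w ^ p ∂μ :=
        lintegral_rpow_lintegral_mul_le_of_schur (.conjExponent hp)
          (k := fun z w => H (z - w)) (hH.comp measurable_sub) hF (fun z => (hrow z).le)
          (fun w => (lintegral_sub_right_eq_self H w).le)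
    _ = _ := by rw [hpow]

def gaussWeight {n : ℕ} (c : ℝ) (x : Cn n) : ℝ≥0∞ := ENNReal.ofReal (Real.exp (-c * ‖x‖ ^ 2))

section Gaussian

variable {n : ℕ} {c : ℝ}

theorem measurable_gaussWeight (c : ℝ) : Measurable (gaussWeight (n := n) c) := by
  unfold gaussWeight
  fun_prop

theorem gaussWeight_neg (c : ℝ) (x : Cn n) : gaussWeight c (-x) = gaussWeight c x := by
  simp [gaussWeight]

theorem gaussWeight_rpow (c p : ℝ) (x : Cn n) : gaussWeight c x ^ p = gaussWeight (p * c) x := by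
  rw [gaussWeight, gaussWeight, ENNReal.ofReal_rpow_of_pos (Real.exp_pos _), ← Real.exp_mul]
  ring_nf

theorem gaussMeasure_eq_withDensity (hc : 0 ≤ c) :
    gaussMeasure n c =
      volume.withDensity fun x => ENNReal.ofReal ((c / Real.pi) ^ n) * gaussWeight c x := by
  simp_rw [gaussMeasure, gaussWeight, ← ENNReal.ofReal_mul (by positivity : 0 ≤ (c / Real.pi) ^ n)]

theorem lintegral_gaussMeasure (hc : 0 ≤ c) {g : Cn n → ℝ≥0∞} (hg : Measurable g) :
    ∫⁻ x, g x ∂gaussMeasure n c =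
      ENNReal.ofReal ((c / Real.pi) ^ n) * ∫⁻ x, gaussWeight c x * g x := by
  rw [gaussMeasure_eq_withDensity hc, lintegral_withDensity_eq_lintegral_mul _
    ((measurable_gaussWeight c).const_mul _) hg]
  simp only [Pi.mul_apply, mul_assoc]
  exact lintegral_const_mul _ ((measurable_gaussWeight c).mul hg)

theorem Complex.integrable_exp_neg_mul_sq_norm (hc : 0 < c) :
    Integrable fun z : ℂ => Real.exp (-c * ‖z‖ ^ 2) := by
  convert (GaussianFourier.integrable_cexp_neg_mul_sq_norm_add (V := ℂ) (b := c)
    (by simpa using hc) 0 0).norm using 2 with z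
  rw [Complex.norm_exp]
  norm_cast
  simp

theorem Cn.integrable_exp_neg_mul_sq_norm (hc : 0 < c) :
    Integrable fun x : Cn n => Real.exp (-c * ‖x‖ ^ 2) := by
  have hprod : ∀ x : Cn n, Real.exp (-c * ‖x‖ ^ 2) = ∏ i, Real.exp (-c * ‖x i‖ ^ 2) := fun x => by
    rw [← Real.exp_sum, EuclideanSpace.norm_eq, Real.sq_sqrt (by positivity), Finset.mul_sum]
  simp only [hprod]
  rw [← (Cn.measurePreserving_toLp n).integrable_comp_emb
    (MeasurableEquiv.toLp 2 (Fin n → ℂ)).measurableEmbedding]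
  exact Integrable.fintype_prod (f := fun _ z => Real.exp (-c * ‖z‖ ^ 2))
    fun _ => Complex.integrable_exp_neg_mul_sq_norm hc

theorem lintegral_gaussWeight_lt_top (hc : 0 < c) : ∫⁻ x : Cn n, gaussWeight c x < ⊤ := by
  simp only [gaussWeight]
  rw [← ofReal_integral_eq_lintegral_ofReal (Cn.integrable_exp_neg_mul_sq_norm hc)
    (ae_of_all _ fun x => (Real.exp_pos _).le)]
  exact ENNReal.ofReal_lt_top

theorem isFiniteMeasure_gaussMeasure (hc : 0 < c) : IsFiniteMeasure (gaussMeasure n c) := by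
  constructor
  rw [← lintegral_one, lintegral_gaussMeasure hc.le measurable_const]
  simpa using ENNReal.mul_lt_top ENNReal.ofReal_lt_top (lintegral_gaussWeight_lt_top hc)

theorem gaussMeasure_absolutelyContinuous (c' : ℝ) (hc : 0 < c) :
    gaussMeasure n c' ≪ gaussMeasure n c :=
  (withDensity_absolutelyContinuous _ _).trans <| withDensity_absolutelyContinuous'
    (by fun_prop) (ae_of_all _ fun x => (ENNReal.ofReal_pos.2 (by positivity)).ne')

end Gaussian

def fockKernel {n : ℕ} (α : ℝ) (z w : Cn n) : ℂ := Complex.exp (α * herm z w)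

def fockKernelOn {n : ℕ} (α : ℝ) (S : Set (Cn n)) (z w : Cn n) : ℂ :=
  S.indicator (fun _ => fockKernel α z w) (z - w)

def fockConst (n : ℕ) (α : ℝ) (S : Set (Cn n)) : ℝ≥0∞ :=
  ENNReal.ofReal ((α / Real.pi) ^ n) * ∫⁻ x in S, gaussWeight (α / 2) x

section Kernel

variable {n : ℕ} {α : ℝ} {S : Set (Cn n)}

theorem measurable_fockKernelOn (α : ℝ) (hS : MeasurableSet S) :
    Measurable (Function.uncurry (fockKernelOn α S)) := by
  have hK : Continuous (Function.uncurry (fockKernel (n := n) α)) := by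
    unfold fockKernel herm
    fun_prop
  exact hK.measurable.ite (hS.preimage measurable_sub) measurable_const

theorem fockKernelOn_add_compl (α : ℝ) (S : Set (Cn n)) (z w : Cn n) :
    fockKernelOn α S z w + fockKernelOn α Sᶜ z w = fockKernel α z w :=
  Set.indicator_self_add_compl_apply _ _ _

theorem fockKernelOn_closedBall_eq_zero {r : ℝ} {z w : Cn n} (h : r < dist z w) :
    fockKernelOn α (closedBall 0 r) z w = 0 :=
  Set.indicator_of_notMem (by simpa [dist_eq_norm] using h) _

theorem exp_mul_exp_mul_norm_fockKernel (α : ℝ) (z w : Cn n) :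
    Real.exp (-(α / 2) * ‖z‖ ^ 2) * Real.exp (-α * ‖w‖ ^ 2) * ‖fockKernel α z w‖ =
      Real.exp (-(α / 2) * ‖z - w‖ ^ 2) * Real.exp (-(α / 2) * ‖w‖ ^ 2) := by
  have hre : (herm z w).re = RCLike.re (inner ℂ z w) := by
    rw [herm, ← inner_conj_symm]
    exact Complex.conj_re _
  rw [fockKernel, Complex.norm_exp, Complex.re_ofReal_mul, hre, ← Real.exp_add, ← Real.exp_add,
    ← Real.exp_add, norm_sub_sq (𝕜 := ℂ)]
  ring_nf

theorem gaussWeight_mul_enorm_fockKernelOn (α : ℝ) (S : Set (Cn n)) (z w : Cn n) :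
    gaussWeight (α / 2) z * (gaussWeight α w * ‖fockKernelOn α S z w‖ₑ) =
      S.indicator (gaussWeight (α / 2)) (z - w) * gaussWeight (α / 2) w := by
  by_cases h : z - w ∈ S
  · simp only [fockKernelOn, gaussWeight, Set.indicator_of_mem h, ← ofReal_norm, ← mul_assoc,
      ← ENNReal.ofReal_mul (Real.exp_nonneg _), exp_mul_exp_mul_norm_fockKernel]
  · simp [fockKernelOn, h]

theorem fockConst_lt_top (hα : 0 < α) (S : Set (Cn n)) : fockConst n α S < ⊤ :=
  ENNReal.mul_lt_top ENNReal.ofReal_lt_top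
    (setLIntegral_le_lintegral S _ |>.trans_lt (lintegral_gaussWeight_lt_top (by positivity)))

theorem tendsto_fockConst_compl_closedBall (hα : 0 < α) :
    Tendsto (fun r : ℝ => fockConst n α (closedBall 0 r)ᶜ) atTop (nhds 0) := by
  have hσ : Tendsto (fun r : ℝ => ∫⁻ x, (closedBall (0 : Cn n) r)ᶜ.indicator
      (gaussWeight (α / 2)) x) atTop (nhds (∫⁻ _ : Cn n, 0)) := by
    refine tendsto_lintegral_filter_of_dominated_convergence (gaussWeight (α / 2))
      (.of_forall fun r => (measurable_gaussWeight _).indicator measurableSet_closedBall.compl)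
      (.of_forall fun r => ae_of_all _ fun x => Set.indicator_le_self _ _ x)
      (lintegral_gaussWeight_lt_top (by positivity)).ne (ae_of_all _ fun x => ?_)
    refine tendsto_const_nhds.congr' ?_
    filter_upwards [eventually_ge_atTop ‖x‖] with r hr
    simp [Set.indicator_of_notMem, hr]
  simpa [fockConst, lintegral_indicator measurableSet_closedBall.compl] using
    ENNReal.Tendsto.const_mul hσ (.inr ENNReal.ofReal_ne_top)

theorem indicator_gaussWeight_neg (c : ℝ) (hS_neg : -S = S) (x : Cn n) :
    S.indicator (gaussWeight c) (-x) = S.indicator (gaussWeight c) x := by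
  have hmem : -x ∈ S ↔ x ∈ S := by rw [← Set.mem_neg, hS_neg]
  by_cases hx : x ∈ S
  · simp [hx, hmem.2 hx, gaussWeight_neg]
  · simp [hx, mt hmem.1 hx]

theorem gaussWeight_mul_lintegral_fockKernelOn (hα : 0 < α) (hS : MeasurableSet S)
    {f : Cn n → ℂ} (hf : Measurable f) (z : Cn n) :
    gaussWeight (α / 2) z * ∫⁻ w, ‖fockKernelOn α S z w‖ₑ * ‖f w‖ₑ ∂gaussMeasure n α =
      ENNReal.ofReal ((α / Real.pi) ^ n) *
        ∫⁻ w, S.indicator (gaussWeight (α / 2)) (z - w) * (gaussWeight (α / 2) w * ‖f w‖ₑ) := by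
  have hkf : Measurable fun w => ‖fockKernelOn α S z w‖ₑ * ‖f w‖ₑ :=
    ((measurable_fockKernelOn α hS).comp measurable_prodMk_left).enorm.mul hf.enorm
  rw [lintegral_gaussMeasure hα.le hkf, mul_left_comm, ← lintegral_const_mul _
    (show Measurable fun w => gaussWeight α w * (‖fockKernelOn α S z w‖ₑ * ‖f w‖ₑ) from
      (measurable_gaussWeight α).mul hkf)]
  congr 2 with w
  rw [← mul_assoc (S.indicator _ _), ← gaussWeight_mul_enorm_fockKernelOn]
  ring

theorem lintegral_rpow_lintegral_fockKernelOn_le {p : ℝ} (hp : 1 < p) (hα : 0 < α)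
    (hS : MeasurableSet S) (hS_neg : -S = S) {f : Cn n → ℂ} (hf : Measurable f) :
    ∫⁻ z, (∫⁻ w, ‖fockKernelOn α S z w‖ₑ * ‖f w‖ₑ ∂gaussMeasure n α) ^ p
        ∂gaussMeasure n (p * α / 2) ≤
      fockConst n α S ^ p * ∫⁻ z, ‖f z‖ₑ ^ p ∂gaussMeasure n (p * α / 2) := by
  have hp0 : 0 < p := by linarith
  have := isFiniteMeasure_gaussMeasure (n := n) hα
  set σ : Cn n → ℝ≥0∞ := gaussWeight (α / 2)
  set H := S.indicator σ
  set F : Cn n → ℝ≥0∞ := fun w => σ w * ‖f w‖ₑ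
  set cα := ENNReal.ofReal ((α / Real.pi) ^ n)
  set cp := ENNReal.ofReal ((p * α / 2 / Real.pi) ^ n)
  have hH : Measurable H := (measurable_gaussWeight _).indicator hS
  have hF : Measurable F := (measurable_gaussWeight _).mul hf.enorm
  have hdens : ∀ z, gaussWeight (p * α / 2) z = σ z ^ p := fun z => by
    rw [gaussWeight_rpow, mul_div_assoc]
  calc ∫⁻ z, (∫⁻ w, ‖fockKernelOn α S z w‖ₑ * ‖f w‖ₑ ∂gaussMeasure n α) ^ p
          ∂gaussMeasure n (p * α / 2)
      = cp * ∫⁻ z, (cα * ∫⁻ w, H (z - w) * F w) ^ p := by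
        rw [lintegral_gaussMeasure (by positivity)
          ((Measurable.lintegral_prod_right (f := fun z w => ‖fockKernelOn α S z w‖ₑ * ‖f w‖ₑ)
            ((measurable_fockKernelOn α hS).enorm.mul (hf.comp measurable_snd).enorm)).pow_const p)]
        simp only [hdens, ← ENNReal.mul_rpow_of_nonneg _ _ hp0.le, σ,
          gaussWeight_mul_lintegral_fockKernelOn hα hS hf]
        rfl
    _ = cp * cα ^ p * ∫⁻ z, (∫⁻ w, H (z - w) * F w) ^ p := by
        simp only [ENNReal.mul_rpow_of_nonneg _ _ hp0.le]
        rw [lintegral_const_mul _ ((Measurable.lintegral_prod_right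
          (f := fun z w => H (z - w) * F w)
          ((hH.comp measurable_sub).mul (hF.comp measurable_snd))).pow_const p), mul_assoc]
    _ ≤ cp * cα ^ p * ((∫⁻ x, H x) ^ p * ∫⁻ w, F w ^ p) := by
        gcongr
        exact lintegral_rpow_lintegral_sub_mul_le hp hH (indicator_gaussWeight_neg _ hS_neg) hF
    _ = fockConst n α S ^ p * ∫⁻ z, ‖f z‖ₑ ^ p ∂gaussMeasure n (p * α / 2) := by
        rw [lintegral_gaussMeasure (by positivity) (hf.enorm.pow_const p), fockConst,
          ENNReal.mul_rpow_of_nonneg _ _ hp0.le, lintegral_indicator hS]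
        simp only [F, ENNReal.mul_rpow_of_nonneg _ _ hp0.le, hdens, mul_assoc]
        ring

end Kernel

def fockIntegralOn {n : ℕ} (α : ℝ) (S : Set (Cn n)) (f : Cn n → ℂ) (z : Cn n) : ℂ :=
  ∫ w, fockKernelOn α S z w * f w ∂gaussMeasure n α

section Integral

variable {n : ℕ} {p α : ℝ} {S : Set (Cn n)} {f g : Cn n → ℂ}

theorem fockIntegralOn_congr_ae (h : f =ᵐ[gaussMeasure n α] g) :
    fockIntegralOn α S f = fockIntegralOn α S g :=
  funext fun _ => integral_congr_ae (h.mono fun w hw => by simp only [hw])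

theorem fockIntegralOn_add_apply {z : Cn n}
    (hf : Integrable (fun w => fockKernelOn α S z w * f w) (gaussMeasure n α))
    (hg : Integrable (fun w => fockKernelOn α S z w * g w) (gaussMeasure n α)) :
    fockIntegralOn α S (f + g) z = fockIntegralOn α S f z + fockIntegralOn α S g z := by
  simp only [fockIntegralOn, Pi.add_apply, mul_add]
  exact integral_add hf hg

theorem fockIntegralOn_smul (c : ℂ) : fockIntegralOn α S (c • f) = c • fockIntegralOn α S f := by
  funext z
  simp only [fockIntegralOn, Pi.smul_apply, smul_eq_mul, mul_left_comm _ c, integral_const_mul]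

theorem enorm_fockIntegralOn_le (z : Cn n) :
    ‖fockIntegralOn α S f z‖ₑ ≤ ∫⁻ w, ‖fockKernelOn α S z w‖ₑ * ‖f w‖ₑ ∂gaussMeasure n α :=
  (enorm_integral_le_lintegral_enorm _).trans_eq (lintegral_congr fun _ => enorm_mul _ _)

theorem eLpNorm_fockIntegralOn_le (hp : 1 < p) (hα : 0 < α) (hS : MeasurableSet S)
    (hS_neg : -S = S) (hf : Measurable f) :
    eLpNorm (fockIntegralOn α S f) (ENNReal.ofReal p) (gaussMeasure n (p * α / 2)) ≤
      fockConst n α S * eLpNorm f (ENNReal.ofReal p) (gaussMeasure n (p * α / 2)) := by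
  have hp0 : 0 < p := by linarith
  rw [eLpNorm_eq_lintegral_rpow_enorm_toReal (by simpa) ENNReal.ofReal_ne_top,
    eLpNorm_eq_lintegral_rpow_enorm_toReal (by simpa) ENNReal.ofReal_ne_top,
    ENNReal.toReal_ofReal hp0.le]
  calc (∫⁻ z, ‖fockIntegralOn α S f z‖ₑ ^ p ∂gaussMeasure n (p * α / 2)) ^ (1 / p)
      ≤ (fockConst n α S ^ p * ∫⁻ z, ‖f z‖ₑ ^ p ∂gaussMeasure n (p * α / 2)) ^ (1 / p) := by
        gcongr
        exact (lintegral_mono fun z => by gcongr; exact enorm_fockIntegralOn_le z).trans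
          (lintegral_rpow_lintegral_fockKernelOn_le hp hα hS hS_neg hf)
    _ = fockConst n α S * (∫⁻ z, ‖f z‖ₑ ^ p ∂gaussMeasure n (p * α / 2)) ^ (1 / p) := by
        rw [ENNReal.mul_rpow_of_nonneg _ _ (by positivity), ← ENNReal.rpow_mul,
          mul_one_div_cancel hp0.ne', ENNReal.rpow_one]

theorem ae_integrable_fockKernelOn_mul (hp : 1 < p) (hα : 0 < α) (hS : MeasurableSet S)
    (hS_neg : -S = S) (hf : Measurable f)
    (hf_mem : MemLp f (ENNReal.ofReal p) (gaussMeasure n (p * α / 2))) :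
    ∀ᵐ z ∂gaussMeasure n (p * α / 2),
      Integrable (fun w => fockKernelOn α S z w * f w) (gaussMeasure n α) := by
  have hp0 : 0 < p := by linarith
  have := isFiniteMeasure_gaussMeasure (n := n) hα
  have hkf : Measurable (Function.uncurry fun z w => fockKernelOn α S z w * f w) :=
    (measurable_fockKernelOn α hS).mul (hf.comp measurable_snd)
  have hf_fin : ∫⁻ z, ‖f z‖ₑ ^ p ∂gaussMeasure n (p * α / 2) < ⊤ := by
    simpa [ENNReal.toReal_ofReal hp0.le] using lintegral_rpow_enorm_lt_top_of_eLpNorm_lt_top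
      (by simpa) ENNReal.ofReal_ne_top hf_mem.eLpNorm_lt_top
  have hfin := (lintegral_rpow_lintegral_fockKernelOn_le hp hα hS hS_neg hf).trans_lt
    (ENNReal.mul_lt_top (ENNReal.rpow_lt_top_of_nonneg hp0.le (fockConst_lt_top hα S).ne) hf_fin)
  have hmeas : Measurable fun z => (∫⁻ w, ‖fockKernelOn α S z w‖ₑ * ‖f w‖ₑ
      ∂gaussMeasure n α) ^ p :=
    (Measurable.lintegral_prod_right (f := fun z w => ‖fockKernelOn α S z w‖ₑ * ‖f w‖ₑ)
      ((measurable_fockKernelOn α hS).enorm.mul (hf.comp measurable_snd).enorm)).pow_const p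
  filter_upwards [ae_lt_top hmeas hfin.ne] with z hz
  refine ⟨(hkf.comp measurable_prodMk_left).aestronglyMeasurable, ?_⟩
  simpa [hasFiniteIntegral_iff_enorm, enorm_mul, ENNReal.rpow_lt_top_iff_of_pos hp0] using hz

theorem memLp_fockIntegralOn (hp : 1 < p) (hα : 0 < α) (hS : MeasurableSet S)
    (hS_neg : -S = S) (hf : Measurable f)
    (hf_mem : MemLp f (ENNReal.ofReal p) (gaussMeasure n (p * α / 2))) :
    MemLp (fockIntegralOn α S f) (ENNReal.ofReal p) (gaussMeasure n (p * α / 2)) := by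
  have := isFiniteMeasure_gaussMeasure (n := n) hα
  refine ⟨(StronglyMeasurable.integral_prod_right'
    (f := fun q : Cn n × Cn n => fockKernelOn α S q.1 q.2 * f q.2) ?_).aestronglyMeasurable,
    (eLpNorm_fockIntegralOn_le hp hα hS hS_neg hf).trans_lt
      (ENNReal.mul_lt_top (fockConst_lt_top hα S) hf_mem.eLpNorm_lt_top)⟩
  exact ((measurable_fockKernelOn α hS).mul (hf.comp measurable_snd)).stronglyMeasurable

theorem norm_le_fockConst_mul_of_ae_eq (hp : 1 < p) (hα : 0 < α) (hS : MeasurableSet S)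
    (hS_neg : -S = S) {u v : Lpa n p α}
    (h : ⇑v =ᵐ[gaussMeasure n (p * α / 2)] fockIntegralOn α S u) :
    ‖v‖ ≤ (fockConst n α S).toReal * ‖u‖ := by
  rw [Lp.norm_def, Lp.norm_def, eLpNorm_congr_ae h, ← ENNReal.toReal_mul]
  exact ENNReal.toReal_mono (ENNReal.mul_lt_top (fockConst_lt_top hα S) (Lp.eLpNorm_lt_top u)).ne
    (eLpNorm_fockIntegralOn_le hp hα hS hS_neg (Lp.stronglyMeasurable u).measurable)

end Integral

section Operator

variable {n : ℕ} {p α : ℝ} [Fact (1 ≤ ENNReal.ofReal p)] {S : Set (Cn n)}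

theorem exists_clm_ae_eq_fockIntegralOn (hp : 1 < p) (hα : 0 < α) (hS : MeasurableSet S)
    (hS_neg : -S = S) :
    ∃ B : Lpa n p α →L[ℂ] Lpa n p α, ∀ u : Lpa n p α,
      ⇑(B u) =ᵐ[gaussMeasure n (p * α / 2)] fockIntegralOn α S u := by
  have hac := (gaussMeasure_absolutelyContinuous (n := n) α
    (by positivity : 0 < p * α / 2)).ae_le
  have hmeas : ∀ u : Lpa n p α, Measurable u := fun u => (Lp.stronglyMeasurable u).measurable
  have hmem := fun u : Lpa n p α =>
    memLp_fockIntegralOn hp hα hS hS_neg (hmeas u) (Lp.memLp u)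
  have hint := fun u : Lpa n p α =>
    ae_integrable_fockKernelOn_mul hp hα hS hS_neg (hmeas u) (Lp.memLp u)
  let T : Lpa n p α →ₗ[ℂ] Lpa n p α :=
    { toFun := fun u => (hmem u).toLp
      map_add' := fun u v => by
        refine Lp.ext ?_
        filter_upwards [(hmem (u + v)).coeFn_toLp, Lp.coeFn_add (hmem u).toLp (hmem v).toLp,
          (hmem u).coeFn_toLp, (hmem v).coeFn_toLp, hint u, hint v] with z h h' hu hv hiu hiv
        rw [h', Pi.add_apply, h, hu, hv,
          fockIntegralOn_congr_ae ((Lp.coeFn_add u v).filter_mono hac),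
          fockIntegralOn_add_apply hiu hiv]
      map_smul' := fun c u => by
        refine Lp.ext ?_
        filter_upwards [(hmem (c • u)).coeFn_toLp, Lp.coeFn_smul c (hmem u).toLp,
          (hmem u).coeFn_toLp] with z h h' hu
        rw [RingHom.id_apply, h', Pi.smul_apply, h, hu,
          fockIntegralOn_congr_ae ((Lp.coeFn_smul c u).filter_mono hac), fockIntegralOn_smul,
          Pi.smul_apply] }
  exact ⟨T.mkContinuous _ fun u => norm_le_fockConst_mul_of_ae_eq hp hα hS hS_neg
    (hmem u).coeFn_toLp, fun u => (hmem u).coeFn_toLp⟩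

theorem sub_ae_eq_fockIntegralOn_compl (hp : 1 < p) (hα : 0 < α) (hS : MeasurableSet S)
    (hS_neg : -S = S) {P B : Lpa n p α →L[ℂ] Lpa n p α} (hP : IsProjOp n p α P)
    (hB : ∀ u : Lpa n p α, ⇑(B u) =ᵐ[gaussMeasure n (p * α / 2)] fockIntegralOn α S u)
    (u : Lpa n p α) :
    ⇑((P - B) u) =ᵐ[gaussMeasure n (p * α / 2)] fockIntegralOn α Sᶜ u := by
  have hmeas : Measurable u := (Lp.stronglyMeasurable u).measurable
  have hSc_neg : -Sᶜ = Sᶜ := by rw [Set.compl_neg, hS_neg]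
  filter_upwards [Lp.coeFn_sub (P u) (B u), hP u, hB u,
    ae_integrable_fockKernelOn_mul hp hα hS hS_neg hmeas (Lp.memLp u),
    ae_integrable_fockKernelOn_mul hp hα hS.compl hSc_neg hmeas (Lp.memLp u)]
    with z hsub hPz hBz hint hint_compl
  rw [sub_apply, hsub, Pi.sub_apply, hPz, hBz, sub_eq_iff_eq_add',
    fockIntegralOn, fockIntegralOn, ← integral_add hint hint_compl]
  congr 1 with w
  rw [← add_mul, fockKernelOn_add_compl, fockKernel]

theorem setDist_le_edist {X : Type*} [PseudoEMetricSpace X] {s t : Set X} {x y : X} (hx : x ∈ s)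
    (hy : y ∈ t) : setDist s t ≤ edist x y :=
  iInf₂_le_of_le x hx (iInf₂_le y hy)

theorem isBandOp_of_ae_eq_integral (hp : 0 < p) (hα : 0 < α) {B : Lpa n p α →L[ℂ] Lpa n p α}
    {k : Cn n → Cn n → ℂ} {r : ℝ} (hr : 0 < r) (hk : ∀ z w, r < dist z w → k z w = 0)
    (hB : ∀ u : Lpa n p α,
      ⇑(B u) =ᵐ[gaussMeasure n (p * α / 2)] fun z => ∫ w, k z w * u w ∂gaussMeasure n α) :
    IsBandOp n p α B := by
  refine ⟨r, hr, fun f g _ _ _ _ Mf Mg hMf hMg hdist => ContinuousLinearMap.ext fun u => ?_⟩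
  have hMg' : ⇑(Mg u) =ᵐ[gaussMeasure n α] fun w => g w * u w :=
    (hMg u).filter_mono (gaussMeasure_absolutelyContinuous α (by positivity)).ae_le
  have hvanish : ∀ z w, f z * (k z w * (g w * u w)) = 0 := fun z w => by
    by_cases hfz : f z = 0
    · simp [hfz]
    by_cases hgw : g w = 0
    · simp [hgw]
    have h := hdist.trans_le (setDist_le_edist hfz hgw)
    rw [edist_dist, ENNReal.ofReal_lt_ofReal_iff_of_nonneg hr.le] at h
    simp [hk z w h]
  refine Lp.ext ?_
  filter_upwards [hMf (B (Mg u)), hB (Mg u), Lp.coeFn_zero ℂ (ENNReal.ofReal p)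
    (gaussMeasure n (p * α / 2))] with z hfz hBz hzero
  rw [ContinuousLinearMap.comp_apply, ContinuousLinearMap.comp_apply, hfz, hBz,
    zero_apply, hzero, integral_congr_ae (hMg'.mono fun w hw => by rw [hw]),
    ← integral_const_mul]
  simp [hvanish]

end Operator

theorem statement9_general (n : ℕ) (p α : ℝ) (hp : 1 < p) (hα : 0 < α)
    [Fact (1 ≤ ENNReal.ofReal p)]
    (P : Lpa n p α →L[ℂ] Lpa n p α) (hP : IsProjOp n p α P) :
    IsBDO n p α P := by
  have hball : ∀ r : ℝ, -closedBall (0 : Cn n) r = closedBall 0 r := fun r => by simp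
  choose B hB using fun k : ℕ => exists_clm_ae_eq_fockIntegralOn hp hα
    (S := closedBall (0 : Cn n) (k + 1)) measurableSet_closedBall (hball _)
  refine ⟨B, fun k => isBandOp_of_ae_eq_integral (by linarith) hα (by positivity)
    (fun _ _ => fockKernelOn_closedBall_eq_zero) (hB k), ?_⟩
  have hnorm : ∀ k : ℕ, ‖P - B k‖ ≤ (fockConst n α (closedBall 0 (k + 1))ᶜ).toReal :=
    fun k => (P - B k).opNorm_le_bound ENNReal.toReal_nonneg fun u =>
      norm_le_fockConst_mul_of_ae_eq hp hα measurableSet_closedBall.compl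
        (by rw [Set.compl_neg, hball]) (sub_ae_eq_fockIntegralOn_compl hp hα
          measurableSet_closedBall (hball _) hP (hB k) u)
  have hlim : Tendsto (fun k : ℕ => (fockConst n α (closedBall 0 (k + 1))ᶜ).toReal) atTop
      (nhds 0) :=
    (ENNReal.tendsto_toReal ENNReal.zero_ne_top).comp <|
      (tendsto_fockConst_compl_closedBall hα).comp
        (tendsto_atTop_add_const_right _ 1 tendsto_natCast_atTop_atTop)
  exact squeeze_zero (fun _ => norm_nonneg _) hnorm hlim

/-- The projection P_α, viewed as a bounded operator on L_α^p, is
band-dominated: it is the operator-norm limit of a sequence of band operators. -/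
theorem statement9 (n : ℕ) (hn : 1 ≤ n) (p α : ℝ) (hp : 1 < p) (hα : 0 < α)
    [Fact (1 ≤ ENNReal.ofReal p)]
    (P : Lpa n p α →L[ℂ] Lpa n p α) (hP : IsProjOp n p α P) :
    IsBDO n p α P :=
  statement9_general n p α hp hα P hP
end
end
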